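/- arXiv:2110.14530 — 7 statements merged into one kernel-verified Lean document; each statement's English description precedes it below -/
import Mathlib

section
/- Every synchronous classical (local hidden variables) correlation is symmetric, i.e., p(y_A,y_B|x_A,x_B) = p(y_B,y_A|x_B,x_A). -/
theorem stmt_1 {X Y Ω : Type*} [Fintype X] [Fintype Y] [Fintype Ω]
    (μ : Ω → ℝ) (pA pB : Y → X → Ω → ℝ)
    (hμ : ∀ ω, 0 ≤ μ ω) (hμ1 : ∑ ω, μ ω = 1)
    (hA0 : ∀ y x ω, 0 ≤ pA y x ω) (hA1 : ∀ x ω, ∑ y, pA y x ω = 1)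
    (hB0 : ∀ y x ω, 0 ≤ pB y x ω) (hB1 : ∀ x ω, ∑ y, pB y x ω = 1)
    (p : Y → Y → X → X → ℝ)
    (hp : ∀ yA yB xA xB, p yA yB xA xB = ∑ ω, μ ω * pA yA xA ω * pB yB xB ω)
    (hsync : ∀ (x : X) (yA yB : Y), yA ≠ yB → p yA yB x x = 0) :
    ∀ yA yB xA xB, p yA yB xA xB = p yB yA xB xA := by
  have key : ∀ ω, 0 < μ ω → ∀ x y, pA y x ω = pB y x ω := by
    intro ω hω x y
    have hzero : ∀ yA yB : Y, yA ≠ yB → pA yA x ω * pB yB x ω = 0 := by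
      intro yA yB hne
      have h0 := hsync x yA yB hne
      rw [hp] at h0
      have hterm := (Finset.sum_eq_zero_iff_of_nonneg (by
        intro i _
        have := hμ i; have := hA0 yA x i; have := hB0 yB x i
        positivity)).mp h0 ω (Finset.mem_univ ω)
      have := mul_eq_zero.mp (by linarith [hterm] : μ ω * (pA yA x ω * pB yB x ω) = 0)
      rcases this with h | h
      · exact absurd h (ne_of_gt hω)
      · exact h
    have h1 : pA y x ω = pA y x ω * pB y x ω := by
      calc pA y x ω = ∑ y', pA y x ω * pB y' x ω := by
            rw [← Finset.mul_sum, hB1, mul_one]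
        _ = pA y x ω * pB y x ω := by
            apply Finset.sum_eq_single
            · intro b _ hb
              exact hzero y b (Ne.symm hb)
            · intro h; exact absurd (Finset.mem_univ y) h
    have h2 : pB y x ω = pA y x ω * pB y x ω := by
      calc pB y x ω = ∑ y', pA y' x ω * pB y x ω := by
            rw [← Finset.sum_mul, hA1, one_mul]
        _ = pA y x ω * pB y x ω := by
            apply Finset.sum_eq_single
            · intro b _ hb
              exact hzero b y hb
            · intro h; exact absurd (Finset.mem_univ y) h
    linarith
  intro yA yB xA xB
  rw [hp, hp]
  apply Finset.sum_congr rfl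
  intro ω _
  rcases (hμ ω).eq_or_lt with h | h
  · rw [← h]; ring
  · rw [key ω h xA yA, ← key ω h xB yB]; ring
end

section
/- If p is a synchronous classical correlation on finite sets X, Y, then there exists a finite probability space (Ω, μ) and functions f_ω : X → Y such that p(y_A,y_B|x_A,x_B) = Σ_ω μ(ω)·[y_A = f_ω(x_A)]·[y_B = f_ω(x_B)], where [·] is the indicator. -/
lemma aux_zero {Y : Type*} [Fintype Y] [DecidableEq Y] (a : Y → ℝ) (h0 : ∀ y, 0 ≤ a y)
    (h1 : ∑ y, a y = 1) (y0 : Y) (hy0 : a y0 = 1) : ∀ y, y ≠ y0 → a y = 0 := by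
  intro y hy
  have hz : ∑ z ∈ Finset.univ.erase y0, a z = 0 := by
    rw [Finset.sum_erase_eq_sub (Finset.mem_univ y0), h1, hy0]; ring
  exact (Finset.sum_eq_zero_iff_of_nonneg (fun z _ => h0 z)).mp hz y
    (Finset.mem_erase.mpr ⟨hy, Finset.mem_univ y⟩)

theorem stmt_2 {X Y Ω : Type*} [Fintype X] [Fintype Y] [Fintype Ω] [DecidableEq Y]
    (μ : Ω → ℝ) (pA pB : Y → X → Ω → ℝ)
    (hμ : ∀ ω, 0 ≤ μ ω) (hμ1 : ∑ ω, μ ω = 1)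
    (hA0 : ∀ y x ω, 0 ≤ pA y x ω) (hA1 : ∀ x ω, ∑ y, pA y x ω = 1)
    (hB0 : ∀ y x ω, 0 ≤ pB y x ω) (hB1 : ∀ x ω, ∑ y, pB y x ω = 1)
    (p : Y → Y → X → X → ℝ)
    (hp : ∀ yA yB xA xB, p yA yB xA xB = ∑ ω, μ ω * pA yA xA ω * pB yB xB ω)
    (hsync : ∀ (x : X) (yA yB : Y), yA ≠ yB → p yA yB x x = 0) :
    ∃ (Ω' : Type) (_ : Fintype Ω') (μ' : Ω' → ℝ) (f : Ω' → X → Y),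
      (∀ ω, 0 ≤ μ' ω) ∧ (∑ ω, μ' ω = 1) ∧
      ∀ yA yB xA xB, p yA yB xA xB =
        ∑ ω, μ' ω * (if yA = f ω xA then (1 : ℝ) else 0) *
          (if yB = f ω xB then (1 : ℝ) else 0) := by
  classical
  -- Key: if μ ω > 0, then for each x both pA and pB are the same point mass.
  have key : ∀ (ω : Ω), 0 < μ ω → ∀ x : X, ∃ y : Y, pA y x ω = 1 ∧ pB y x ω = 1 := by
    intro ω hω x
    have hod : ∀ yA yB : Y, yA ≠ yB → pA yA x ω * pB yB x ω = 0 := by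
      intro yA yB hne
      have h0 := hsync x yA yB hne
      rw [hp] at h0
      have hterm : ∀ ω' ∈ Finset.univ, 0 ≤ μ ω' * pA yA x ω' * pB yB x ω' :=
        fun ω' _ => mul_nonneg (mul_nonneg (hμ _) (hA0 _ _ _)) (hB0 _ _ _)
      have hz := (Finset.sum_eq_zero_iff_of_nonneg hterm).mp h0 ω (Finset.mem_univ ω)
      rw [mul_assoc] at hz
      exact (mul_eq_zero.mp hz).resolve_left (ne_of_gt hω)
    have hdiag : ∑ y, pA y x ω * pB y x ω = 1 := by
      have expand : (∑ yA, pA yA x ω) * (∑ yB, pB yB x ω)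
          = ∑ yA, ∑ yB, pA yA x ω * pB yB x ω := by
        rw [Finset.sum_mul_sum]
      have inner : ∀ yA : Y, ∑ yB, pA yA x ω * pB yB x ω = pA yA x ω * pB yA x ω := by
        intro yA
        exact Finset.sum_eq_single yA (fun b _ hb => hod yA b (fun h => hb h.symm))
          (fun h => absurd (Finset.mem_univ yA) h)
      calc ∑ y, pA y x ω * pB y x ω = ∑ yA, ∑ yB, pA yA x ω * pB yB x ω := by
            exact (Finset.sum_congr rfl (fun yA _ => (inner yA))).symm
        _ = 1 := by rw [← expand, hA1, hB1, one_mul]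
    have hy : ∃ y : Y, pA y x ω * pB y x ω ≠ 0 := by
      by_contra h
      push_neg at h
      rw [Finset.sum_congr rfl (fun y _ => h y)] at hdiag
      simp at hdiag
    obtain ⟨y, hyne⟩ := hy
    have hpAne : pA y x ω ≠ 0 := fun h => hyne (by rw [h, zero_mul])
    have hpBne : pB y x ω ≠ 0 := fun h => hyne (by rw [h, mul_zero])
    refine ⟨y, ?_, ?_⟩
    · have : ∀ y' : Y, y' ≠ y → pA y' x ω = 0 := by
        intro y' hy'
        have := hod y' y hy'
        exact (mul_eq_zero.mp this).resolve_right hpBne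
      rw [← hA1 x ω]
      exact (Finset.sum_eq_single y (fun b _ hb => this b hb)
        (fun h => absurd (Finset.mem_univ y) h)).symm
    · have : ∀ y' : Y, y' ≠ y → pB y' x ω = 0 := by
        intro y' hy'
        have := hod y y' (fun h => hy' h.symm)
        exact (mul_eq_zero.mp this).resolve_left hpAne
      rw [← hB1 x ω]
      exact (Finset.sum_eq_single y (fun b _ hb => this b hb)
        (fun h => absurd (Finset.mem_univ y) h)).symm
  have hfex : ∀ (ω : Ω) (x : X), ∃ y : Y, 0 < μ ω → pA y x ω = 1 ∧ pB y x ω = 1 := by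
    intro ω x
    by_cases hω : 0 < μ ω
    · obtain ⟨y, hy⟩ := key ω hω x
      exact ⟨y, fun _ => hy⟩
    · have hYne : Nonempty Y := by
        by_contra h
        rw [not_nonempty_iff] at h
        have := hA1 x ω
        rw [Finset.univ_eq_empty, Finset.sum_empty] at this
        norm_num at this
      exact ⟨Classical.arbitrary Y, fun h => absurd h hω⟩
  choose f hf using hfex
  -- transport to Type 0
  obtain ⟨e⟩ : Nonempty (Fin (Fintype.card Ω) ≃ Ω) := ⟨(Fintype.equivFin Ω).symm⟩
  refine ⟨Fin (Fintype.card Ω), inferInstance, fun i => μ (e i), fun i x => f (e i) x,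
    fun i => hμ _, ?_, ?_⟩
  · exact (Fintype.sum_equiv e _ μ (fun i => rfl)).trans hμ1
  · intro yA yB xA xB
    rw [hp]
    refine Fintype.sum_equiv e.symm _ _ (fun ω => ?_)
    simp only [Equiv.apply_symm_apply]
    rcases eq_or_lt_of_le (hμ ω) with h0 | hpos
    · rw [← h0]; ring
    · obtain ⟨hA, hB⟩ := hf ω xA hpos
      obtain ⟨hA', hB'⟩ := hf ω xB hpos
      have e1 : pA yA xA ω = if yA = f ω xA then 1 else 0 := by
        by_cases h : yA = f ω xA
        · rw [if_pos h, h]; exact hA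
        · rw [if_neg h]
          exact aux_zero (fun y => pA y xA ω) (fun y => hA0 y xA ω)
            (hA1 xA ω) (f ω xA) hA yA h
      have e2 : pB yB xB ω = if yB = f ω xB then 1 else 0 := by
        by_cases h : yB = f ω xB
        · rw [if_pos h, h]; exact hB'
        · rw [if_neg h]
          exact aux_zero (fun y => pB y xB ω) (fun y => hB0 y xB ω)
            (hB1 xB ω) (f ω xB) hB' yB h
      rw [e1, e2]
end

section
/- Let M_0, M_1, M_2 be Hermitian operators on a d-dimensional Hilbert space with M_x² = 1, and set c_{xx'} = (1/d)tr(M_x M_{x'}). Then 1 + 2(1 + c_{01} + c_{02} + c_{12}) = (1/d)tr((M_0+M_1+M_2)²) ≥ 0, and hence (1 + c_{01} + c_{02} + c_{12})/4 ≥ -1/8. -/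
open Matrix

lemma trace_sq_re_nonneg {d : ℕ} (S : Matrix (Fin d) (Fin d) ℂ)
    (hS : Sᴴ = S) : 0 ≤ (S ^ 2).trace.re := by
  have h : S ^ 2 = Sᴴ * S := by rw [hS, sq]
  rw [h, Matrix.trace, Complex.re_sum]
  apply Finset.sum_nonneg
  intro i _
  simp only [Matrix.diag_apply, Matrix.mul_apply, Matrix.conjTranspose_apply, Complex.re_sum]
  apply Finset.sum_nonneg
  intro j _
  rw [show star (S j i) * S j i = (Complex.normSq (S j i) : ℂ) from Complex.normSq_eq_conj_mul_self.symm]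
  simp [Complex.normSq_nonneg]

theorem stmt_5 (d : ℕ) (hd : 0 < d)
    (M : Fin 3 → Matrix (Fin d) (Fin d) ℂ)
    (hherm : ∀ x, (M x)ᴴ = M x)
    (hinv : ∀ x, M x * M x = 1) :
    (1 : ℝ) + 2 * (1 + (((1 : ℂ) / d) * (M 0 * M 1).trace).re
        + (((1 : ℂ) / d) * (M 0 * M 2).trace).re
        + (((1 : ℂ) / d) * (M 1 * M 2).trace).re)
      = (((1 : ℂ) / d) * ((M 0 + M 1 + M 2) ^ 2).trace).re ∧
    0 ≤ (((1 : ℂ) / d) * ((M 0 + M 1 + M 2) ^ 2).trace).re ∧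
    -(1 / 8 : ℝ) ≤ (1 + (((1 : ℂ) / d) * (M 0 * M 1).trace).re
        + (((1 : ℂ) / d) * (M 0 * M 2).trace).re
        + (((1 : ℂ) / d) * (M 1 * M 2).trace).re) / 4 := by
  have hdC : (d : ℂ) ≠ 0 := Nat.cast_ne_zero.mpr hd.ne'
  set S := M 0 + M 1 + M 2 with hSdef
  have hSherm : Sᴴ = S := by
    simp [hSdef, Matrix.conjTranspose_add, hherm]
  -- expansion of S^2
  have hexp : S ^ 2 = (1 + 1 + 1 : Matrix (Fin d) (Fin d) ℂ)
      + (M 0 * M 1 + M 1 * M 0) + (M 0 * M 2 + M 2 * M 0) + (M 1 * M 2 + M 2 * M 1) := by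
    have h0 := hinv 0; have h1 := hinv 1; have h2 := hinv 2
    simp only [hSdef, sq]
    simp only [Matrix.add_mul, Matrix.mul_add, h0, h1, h2]
    abel
  have htrace : (S ^ 2).trace = 3 * d + 2 * (M 0 * M 1).trace
      + 2 * (M 0 * M 2).trace + 2 * (M 1 * M 2).trace := by
    rw [hexp]
    simp only [Matrix.trace_add, Matrix.trace_one]
    rw [Matrix.trace_mul_comm (M 1) (M 0), Matrix.trace_mul_comm (M 2) (M 0),
      Matrix.trace_mul_comm (M 2) (M 1)]
    simp only [Finset.card_univ, Fintype.card_fin]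
    push_cast
    ring
  have key : ((1 : ℂ) / d) * (S ^ 2).trace = 3 + 2 * (((1:ℂ)/d) * (M 0 * M 1).trace)
      + 2 * (((1:ℂ)/d) * (M 0 * M 2).trace) + 2 * (((1:ℂ)/d) * (M 1 * M 2).trace) := by
    rw [htrace]
    field_simp
  have hre : (((1 : ℂ) / d) * (S ^ 2).trace).re
      = 3 + 2 * (((1:ℂ)/d) * (M 0 * M 1).trace).re
      + 2 * (((1:ℂ)/d) * (M 0 * M 2).trace).re
      + 2 * (((1:ℂ)/d) * (M 1 * M 2).trace).re := by
    rw [key]; simp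
  have hnn : 0 ≤ (((1 : ℂ) / d) * (S ^ 2).trace).re := by
    have h1 : 0 ≤ (S ^ 2).trace.re := trace_sq_re_nonneg S hSherm
    have h2 : ((1 : ℂ) / d) = ((1 / d : ℝ) : ℂ) := by push_cast; ring
    rw [h2, Complex.re_ofReal_mul]
    positivity
  refine ⟨by rw [hre]; ring, hnn, ?_⟩
  rw [hre] at hnn
  linarith
end

section
/- Let C be a 3×3 real symmetric matrix with ones on the diagonal which is positive semidefinite (i.e., c_{xx'} = ⟨u_x, u_{x'}⟩ for unit vectors u_0, u_1, u_2). Then each of the four quantities J_k defined by J_0 = (1 - c_{01} - c_{02} + c_{12})/4, J_1 = (1 - c_{01} + c_{02} - c_{12})/4, J_2 = (1 + c_{01} - c_{02} - c_{12})/4, J_3 = (1 + c_{01} + c_{02} + c_{12})/4 satisfies J_k ≥ -1/8. -/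
theorem stmt_6 (C : Matrix (Fin 3) (Fin 3) ℝ)
    (hsymm : C.IsSymm) (hdiag : ∀ i, C i i = 1) (hpsd : C.PosSemidef) :
    -(1 / 8 : ℝ) ≤ (1 - C 0 1 - C 0 2 + C 1 2) / 4 ∧
    -(1 / 8 : ℝ) ≤ (1 - C 0 1 + C 0 2 - C 1 2) / 4 ∧
    -(1 / 8 : ℝ) ≤ (1 + C 0 1 - C 0 2 - C 1 2) / 4 ∧
    -(1 / 8 : ℝ) ≤ (1 + C 0 1 + C 0 2 + C 1 2) / 4 := by
  have h10 : C 1 0 = C 0 1 := by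
    have := congrFun (congrFun hsymm 0) 1; simpa [Matrix.transpose_apply] using this
  have h20 : C 2 0 = C 0 2 := by
    have := congrFun (congrFun hsymm 0) 2; simpa [Matrix.transpose_apply] using this
  have h21 : C 2 1 = C 1 2 := by
    have := congrFun (congrFun hsymm 1) 2; simpa [Matrix.transpose_apply] using this
  have d0 := hdiag 0
  have d1 := hdiag 1
  have d2 := hdiag 2
  have key := hpsd.dotProduct_mulVec_nonneg
  have h1 := key ![1, -1, -1]
  have h2 := key ![1, -1, 1]
  have h3 := key ![1, 1, -1]
  have h4 := key ![1, 1, 1]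
  simp [dotProduct, Matrix.mulVec, Fin.sum_univ_three, h10, h20, h21, d0, d1, d2] at h1 h2 h3 h4
  refine ⟨by linarith, by linarith, by linarith, by linarith⟩
end

section
/- If u_0, u_1, u_2 are unit vectors in a real inner product space with pairwise inner products c_{01}, c_{02}, c_{12} satisfying 1 + c_{01} + c_{02} + c_{12} = -1/2 (i.e., J_3 = -1/8), then c_{01} = c_{02} = c_{12} = -1/2. -/
/-! Since `‖u₀ + u₁ + u₂‖² = 3 + 2 (c₀₁ + c₀₂ + c₁₂) = 0`, the three unit vectors sum to zero.
Then `u_i + u_j = -u_k`, and comparing squared norms gives `2 + 2 c_ij = 1`. -/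

open RealInnerProductSpace

section

variable {F : Type*} [NormedAddCommGroup F] [InnerProductSpace ℝ F]

theorem norm_add_add_sq_real (x y z : F) :
    ‖x + y + z‖ ^ 2 = ‖x‖ ^ 2 + ‖y‖ ^ 2 + ‖z‖ ^ 2 + 2 * (⟪x, y⟫ + ⟪x, z⟫ + ⟪y, z⟫) := by
  rw [norm_add_sq_real, norm_add_sq_real, inner_add_left]
  ring

theorem two_mul_inner_of_add_add_eq_zero {x y z : F} (h : x + y + z = 0) :
    2 * ⟪x, y⟫ = ‖z‖ ^ 2 - ‖x‖ ^ 2 - ‖y‖ ^ 2 := by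
  have hxy : x + y = -z := eq_neg_of_add_eq_zero_left h
  have := norm_add_sq_real x y
  rw [hxy, norm_neg] at this
  linarith

end

theorem stmt_8 {F : Type*} [NormedAddCommGroup F] [InnerProductSpace ℝ F]
    (u : Fin 3 → F) (hu : ∀ i, ‖u i‖ = 1)
    (h : (1 : ℝ) + inner ℝ (u 0) (u 1) + inner ℝ (u 0) (u 2) + inner ℝ (u 1) (u 2) = -(1 / 2)) :
    (inner ℝ (u 0) (u 1) : ℝ) = -(1 / 2) ∧ (inner ℝ (u 0) (u 2) : ℝ) = -(1 / 2) ∧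
      (inner ℝ (u 1) (u 2) : ℝ) = -(1 / 2) := by
  have hsum : u 0 + u 1 + u 2 = 0 := by
    rw [← norm_eq_zero, ← sq_eq_zero_iff, norm_add_add_sq_real, hu, hu, hu]
    linarith
  have h01 := two_mul_inner_of_add_add_eq_zero hsum
  have h02 := two_mul_inner_of_add_add_eq_zero (x := u 0) (y := u 2) (z := u 1)
    (by rw [← hsum]; abel)
  have h12 := two_mul_inner_of_add_add_eq_zero (x := u 1) (y := u 2) (z := u 0)
    (by rw [← hsum]; abel)
  simp only [hu] at h01 h02 h12
  refine ⟨?_, ?_, ?_⟩ <;> linarith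
end

section
/- For all θ ∈ [2π/3 - π/6, 2π/3 + π/6], the inequality 6 + 4cos(2θ) - 4|cos θ| ≥ 8 sin²(θ - 2π/3) holds. -/
theorem stmt_13 :
    ∀ θ ∈ Set.Icc (2 * Real.pi / 3 - Real.pi / 6) (2 * Real.pi / 3 + Real.pi / 6),
      8 * Real.sin (θ - 2 * Real.pi / 3) ^ 2 ≤
        6 + 4 * Real.cos (2 * θ) - 4 * |Real.cos θ| := by
  intro θ hθ
  obtain ⟨h1, h2⟩ := hθ
  have hπ := Real.pi_pos
  have hθ1 : Real.pi / 2 ≤ θ := by linarith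
  have hθ2 : θ ≤ 5 * Real.pi / 6 := by linarith
  have hc : Real.cos θ ≤ 0 :=
    Real.cos_nonpos_of_pi_div_two_le_of_le hθ1 (by linarith)
  have hs : 0 ≤ Real.sin θ :=
    Real.sin_nonneg_of_nonneg_of_le_pi (by linarith) (by linarith)
  have hpyth := Real.sin_sq_add_cos_sq θ
  have hc1 : -1 ≤ Real.cos θ := Real.neg_one_le_cos θ
  have h3 : Real.sqrt 3 ^ 2 = 3 := Real.sq_sqrt (by norm_num)
  have habs : |Real.cos θ| = -Real.cos θ := abs_of_nonpos hc
  have hcos23 : Real.cos (2 * Real.pi / 3) = -(1 / 2) := by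
    rw [show 2 * Real.pi / 3 = Real.pi - Real.pi / 3 by ring, Real.cos_pi_sub,
      Real.cos_pi_div_three]
  have hsin23 : Real.sin (2 * Real.pi / 3) = Real.sqrt 3 / 2 := by
    rw [show 2 * Real.pi / 3 = Real.pi - Real.pi / 3 by ring, Real.sin_pi_sub,
      Real.sin_pi_div_three]
  have hsin : Real.sin (θ - 2 * Real.pi / 3) =
      -(1 / 2) * Real.sin θ - Real.sqrt 3 / 2 * Real.cos θ := by
    rw [Real.sin_sub, hcos23, hsin23]; ring
  have hcos2 : Real.cos (2 * θ) = 2 * Real.cos θ ^ 2 - 1 := Real.cos_two_mul θ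
  have hge : Real.cos θ + 1 ≤ Real.sqrt 3 * Real.sin θ := by
    nlinarith [Real.sqrt_nonneg 3, mul_nonneg (Real.sqrt_nonneg 3) hs,
      mul_nonneg (neg_nonneg.2 hc) (by linarith : (0:ℝ) ≤ Real.cos θ + 1)]
  have key : Real.sqrt 3 * Real.sin θ * Real.cos θ ≤ Real.cos θ ^ 2 + Real.cos θ := by
    nlinarith [mul_nonneg (neg_nonneg.2 hc)
      (sub_nonneg.2 hge)]
  rw [habs, hsin, hcos2]
  nlinarith [key, hpyth, h3]
end

section
/- Let 0 ≤ λ ≤ 1/8, μ ≥ 0, and 0 ≤ ε < 2/3. Define S̃(ε) = ((3ε² - 4ε)(6μ - 8λ + 9) + 24μ)/(6(3ε-2)²). If ε > 2/3 - (2/3)·√(64λ² + 6(8λ-9)μ - 72μ² - 144λ + 81)/(6μ - 8λ + 9) (assuming the discriminant 64λ² + 6(8λ-9)μ - 72μ² - 144λ + 81 ≥ 0 and 6μ - 8λ + 9 > 0), then S̃(ε) < 0. -/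
theorem stmt_19 (lam μ ε : ℝ) (hlam0 : 0 ≤ lam) (hlam1 : lam ≤ 1 / 8) (hμ : 0 ≤ μ)
    (hε0 : 0 ≤ ε) (hε1 : ε < 2 / 3)
    (hdisc : 0 ≤ 64 * lam ^ 2 + 6 * (8 * lam - 9) * μ - 72 * μ ^ 2 - 144 * lam + 81)
    (hden : 0 < 6 * μ - 8 * lam + 9)
    (hε : ε > 2 / 3 - (2 / 3) *
      Real.sqrt (64 * lam ^ 2 + 6 * (8 * lam - 9) * μ - 72 * μ ^ 2 - 144 * lam + 81) /
        (6 * μ - 8 * lam + 9)) :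
    ((3 * ε ^ 2 - 4 * ε) * (6 * μ - 8 * lam + 9) + 24 * μ) / (6 * (3 * ε - 2) ^ 2) < 0 := by
  set s := Real.sqrt (64 * lam ^ 2 + 6 * (8 * lam - 9) * μ - 72 * μ ^ 2 - 144 * lam + 81) with hs
  have hs0 : 0 ≤ s := Real.sqrt_nonneg _
  have hs2 : s ^ 2 = 64 * lam ^ 2 + 6 * (8 * lam - 9) * μ - 72 * μ ^ 2 - 144 * lam + 81 :=
    Real.sq_sqrt hdisc
  have h1 : 2 / 3 - ε < 2 / 3 * s / (6 * μ - 8 * lam + 9) := by linarith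
  have h2 : (2 / 3 - ε) * (6 * μ - 8 * lam + 9) < 2 / 3 * s := (lt_div_iff₀ hden).mp h1
  have hnum : (3 * ε ^ 2 - 4 * ε) * (6 * μ - 8 * lam + 9) + 24 * μ < 0 := by
    have hA : 0 < 6 * μ - 8 * lam + 9 := hden
    nlinarith [mul_pos hA (mul_pos (show (0:ℝ) < 2 - 3 * ε by linarith)
        (show (0:ℝ) < 2 - 3 * ε by linarith)), sq_nonneg s,
      mul_lt_mul_of_pos_left h2 hA, sq_nonneg ((2/3 - ε) * (6 * μ - 8 * lam + 9))]
  have hd : 0 < 6 * (3 * ε - 2) ^ 2 := by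
    have : 3 * ε - 2 ≠ 0 := by intro h; nlinarith
    positivity
  exact div_neg_of_neg_of_pos hnum hd
end
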